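/- Consider the uncoupled transport system σ_t = Σσ_x + Ω(x)σ on (0,1) with Σ = diag(1/√ε, 1/√μ), boundary condition σ(1,t) = 0, and Ω(x) lower-triangular with zero diagonal and bounded entry ω₂₁(x). If √μ ≥ √ε, then any classical solution satisfies σ(x,t) = 0 for all x ∈ [0,1] whenever t > √μ. -/

import Mathlib

open Real

/-- Derivative of a `C¹` function of two variables along a characteristic line. -/
lemma charDeriv (F : ℝ × ℝ → ℝ) (hF : ContDiff ℝ 1 F) (x t a s : ℝ) :
    HasDerivAt (fun s => F (x + a * s, t - s))
      (a * deriv (fun y => F (y, t - s)) (x + a * s)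
        - deriv (fun τ => F (x + a * s, τ)) (t - s)) s := by
  set q : ℝ × ℝ := (x + a * s, t - s) with hq
  have hFd : HasFDerivAt F (fderiv ℝ F q) q := (hF.differentiable one_ne_zero q).hasFDerivAt
  have h1 : HasDerivAt (fun s : ℝ => x + a * s) a s := by
    simpa using ((hasDerivAt_id s).const_mul a).const_add x
  have h2 : HasDerivAt (fun s : ℝ => t - s) (-1) s := by
    simpa using (hasDerivAt_id s).const_sub t
  have hline : HasDerivAt (fun s : ℝ => ((x + a * s, t - s) : ℝ × ℝ)) (a, -1) s := h1.prodMk h2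
  have hcomp := hFd.comp_hasDerivAt s hline
  have hlx : HasDerivAt (fun y : ℝ => ((y, t - s) : ℝ × ℝ)) ((1:ℝ), (0:ℝ)) (x + a * s) :=
    (hasDerivAt_id _).prodMk (hasDerivAt_const _ _)
  have hx : HasDerivAt (fun y => F (y, t - s)) (fderiv ℝ F q (1, 0)) (x + a * s) :=
    HasFDerivAt.comp_hasDerivAt (x + a * s) hFd hlx
  have hlt : HasDerivAt (fun τ : ℝ => ((x + a * s, τ) : ℝ × ℝ)) ((0:ℝ), (1:ℝ)) (t - s) :=
    (hasDerivAt_const _ _).prodMk (hasDerivAt_id _)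
  have ht : HasDerivAt (fun τ => F (x + a * s, τ)) (fderiv ℝ F q (0, 1)) (t - s) :=
    HasFDerivAt.comp_hasDerivAt (t - s) hFd hlt
  have key : fderiv ℝ F q (a, -1)
      = a * fderiv ℝ F q (1, 0) + (-1) * fderiv ℝ F q (0, 1) := by
    have hv : ((a, -1) : ℝ × ℝ) = a • ((1:ℝ), (0:ℝ)) + (-1 : ℝ) • ((0:ℝ), (1:ℝ)) := by
      simp [Prod.ext_iff]
    rw [hv, map_add, map_smul, map_smul]
    simp [smul_eq_mul]
  have hval : (fderiv ℝ F q) (a, -1)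
      = a * deriv (fun y => F (y, t - s)) (x + a * s)
        - deriv (fun τ => F (x + a * s, τ)) (t - s) := by
    rw [key, hx.deriv, ht.deriv]; ring
  rw [← hval]
  exact hcomp

/-- Curried version of `charDeriv`. -/
lemma charDeriv' (u : ℝ → ℝ → ℝ) (hu : ContDiff ℝ 1 (fun z : ℝ × ℝ => u z.1 z.2))
    (x t a s : ℝ) :
    HasDerivAt (fun s => u (x + a * s) (t - s))
      (a * deriv (fun y => u y (t - s)) (x + a * s)
        - deriv (fun τ => u (x + a * s) τ) (t - s)) s :=
  charDeriv (fun z : ℝ × ℝ => u z.1 z.2) hu x t a s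

/-- For the cascaded transport system `σ_t = Σ σ_x + Ω(x) σ` with
`Σ = diag(1/√ε, 1/√μ)`, `σ(1,t) = 0`, and `Ω` strictly lower triangular, any classical
solution vanishes identically for `t > √μ` (assuming `μ ≥ ε`). -/
theorem cascaded_transport_finite_time_extinction
    (ε μ : ℝ) (hε : 0 < ε) (hμ : 0 < μ) (hμε : ε ≤ μ)
    (ω : ℝ → ℝ) (hω : ContinuousOn ω (Set.Icc 0 1))
    (σ₁ σ₂ : ℝ → ℝ → ℝ)
    (hσ₁ : ContDiff ℝ 1 (fun z : ℝ × ℝ => σ₁ z.1 z.2))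
    (hσ₂ : ContDiff ℝ 1 (fun z : ℝ × ℝ => σ₂ z.1 z.2))
    (hPDE1 : ∀ x t : ℝ, x ∈ Set.Ioo (0:ℝ) 1 → 0 < t →
      deriv (fun τ => σ₁ x τ) t = (1 / Real.sqrt ε) * deriv (fun y => σ₁ y t) x)
    (hPDE2 : ∀ x t : ℝ, x ∈ Set.Ioo (0:ℝ) 1 → 0 < t →
      deriv (fun τ => σ₂ x τ) t =
        (1 / Real.sqrt μ) * deriv (fun y => σ₂ y t) x + ω x * σ₁ x t)
    (hbc : ∀ t : ℝ, 0 ≤ t → σ₁ 1 t = 0 ∧ σ₂ 1 t = 0) :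
    ∀ x ∈ Set.Icc (0:ℝ) 1, ∀ t : ℝ, Real.sqrt μ < t →
      σ₁ x t = 0 ∧ σ₂ x t = 0 := by
  have hse : 0 < Real.sqrt ε := Real.sqrt_pos.2 hε
  have hsμ : 0 < Real.sqrt μ := Real.sqrt_pos.2 hμ
  have hεμ : Real.sqrt ε ≤ Real.sqrt μ := Real.sqrt_le_sqrt hμε
  -- Step 1: σ₁ vanishes as soon as t > (1-x)√ε.
  have h1 : ∀ x ∈ Set.Icc (0:ℝ) 1, ∀ t : ℝ, (1 - x) * Real.sqrt ε < t → σ₁ x t = 0 := by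
    rintro x ⟨hx0, hx1⟩ t ht
    have hS0 : 0 ≤ (1 - x) * Real.sqrt ε := mul_nonneg (by linarith) hse.le
    have htpos : 0 < t := lt_of_le_of_lt hS0 ht
    rcases eq_or_lt_of_le hx1 with hx1' | hx1'
    · rw [hx1']; exact (hbc t htpos.le).1
    · set S := (1 - x) * Real.sqrt ε with hSdef
      have hSpos : 0 < S := mul_pos (by linarith) hse
      set g : ℝ → ℝ := fun s => σ₁ (x + (Real.sqrt ε)⁻¹ * s) (t - s) with hg
      have hcont : ContinuousOn g (Set.Icc 0 S) := by
        apply Continuous.continuousOn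
        have hc : Continuous (fun s : ℝ => ((x + (Real.sqrt ε)⁻¹ * s, t - s) : ℝ × ℝ)) := by
          continuity
        exact hσ₁.continuous.comp hc
      have hd : ∀ s ∈ Set.Ioo (0:ℝ) S, HasDerivAt g ((fun _ : ℝ => (0:ℝ)) s) s := by
        intro s hs
        obtain ⟨hs0, hsS⟩ := hs
        have hy0 : 0 < x + (Real.sqrt ε)⁻¹ * s :=
          add_pos_of_nonneg_of_pos hx0 (mul_pos (inv_pos.2 hse) hs0)
        have hy1 : x + (Real.sqrt ε)⁻¹ * s < 1 := by
          have h : (Real.sqrt ε)⁻¹ * s < 1 - x := by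
            rw [inv_mul_lt_iff₀ hse]
            nlinarith [hsS]
          linarith
        have hts : 0 < t - s := by
          have : s < t := lt_trans hsS ht
          linarith
        have H := charDeriv' σ₁ hσ₁ x t (Real.sqrt ε)⁻¹ s
        have hz : (Real.sqrt ε)⁻¹ * deriv (fun y => σ₁ y (t - s)) (x + (Real.sqrt ε)⁻¹ * s)
            - deriv (fun τ => σ₁ (x + (Real.sqrt ε)⁻¹ * s) τ) (t - s) = 0 := by
          rw [hPDE1 _ _ ⟨hy0, hy1⟩ hts, one_div]
          ring
        rw [hz] at H
        exact H
      obtain ⟨c, _, hceq⟩ := exists_hasDerivAt_eq_slope g (fun _ => (0:ℝ)) hSpos hcont hd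
      have hslope : g S = g 0 := by
        have hne : S - 0 ≠ 0 := by simpa using hSpos.ne'
        field_simp at hceq
        linarith [hceq]
      have hx1eq : x + (Real.sqrt ε)⁻¹ * S = 1 := by
        rw [hSdef]
        field_simp
        ring
      have hgS : g S = 0 := by
        have : g S = σ₁ 1 (t - S) := by rw [hg]; simp only []; rw [hx1eq]
        rw [this]
        exact (hbc (t - S) (by linarith)).1
      have hg0 : g 0 = σ₁ x t := by rw [hg]; simp
      rw [← hg0, ← hslope, hgS]
  -- Step 2: σ₂ vanishes as soon as t > (1-x)√μ.
  have h2 : ∀ x ∈ Set.Icc (0:ℝ) 1, ∀ t : ℝ, (1 - x) * Real.sqrt μ < t → σ₂ x t = 0 := by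
    rintro x ⟨hx0, hx1⟩ t ht
    have hS0 : 0 ≤ (1 - x) * Real.sqrt μ := mul_nonneg (by linarith) hsμ.le
    have htpos : 0 < t := lt_of_le_of_lt hS0 ht
    rcases eq_or_lt_of_le hx1 with hx1' | hx1'
    · rw [hx1']; exact (hbc t htpos.le).2
    · set S := (1 - x) * Real.sqrt μ with hSdef
      have hSpos : 0 < S := mul_pos (by linarith) hsμ
      set g : ℝ → ℝ := fun s => σ₂ (x + (Real.sqrt μ)⁻¹ * s) (t - s) with hg
      have hcont : ContinuousOn g (Set.Icc 0 S) := by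
        apply Continuous.continuousOn
        have hc : Continuous (fun s : ℝ => ((x + (Real.sqrt μ)⁻¹ * s, t - s) : ℝ × ℝ)) := by
          continuity
        exact hσ₂.continuous.comp hc
      have hd : ∀ s ∈ Set.Ioo (0:ℝ) S, HasDerivAt g ((fun _ : ℝ => (0:ℝ)) s) s := by
        intro s hs
        obtain ⟨hs0, hsS⟩ := hs
        have hy0 : 0 < x + (Real.sqrt μ)⁻¹ * s :=
          add_pos_of_nonneg_of_pos hx0 (mul_pos (inv_pos.2 hsμ) hs0)
        have hy1 : x + (Real.sqrt μ)⁻¹ * s < 1 := by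
          have h : (Real.sqrt μ)⁻¹ * s < 1 - x := by
            rw [inv_mul_lt_iff₀ hsμ]
            nlinarith [hsS]
          linarith
        have hts : 0 < t - s := by
          have : s < t := lt_trans hsS ht
          linarith
        -- σ₁ vanishes at the point on the characteristic
        have hσ₁zero : σ₁ (x + (Real.sqrt μ)⁻¹ * s) (t - s) = 0 := by
          apply h1 _ ⟨hy0.le, hy1.le⟩
          have hkey : (1 - (x + (Real.sqrt μ)⁻¹ * s)) * Real.sqrt μ
              = (1 - x) * Real.sqrt μ - s := by
            field_simp
            ring
          have hle : (1 - (x + (Real.sqrt μ)⁻¹ * s)) * Real.sqrt ε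
              ≤ (1 - (x + (Real.sqrt μ)⁻¹ * s)) * Real.sqrt μ :=
            mul_le_mul_of_nonneg_left hεμ (by linarith)
          rw [hkey] at hle
          have : (1 - x) * Real.sqrt μ < t := ht
          linarith
        have H := charDeriv' σ₂ hσ₂ x t (Real.sqrt μ)⁻¹ s
        have hz : (Real.sqrt μ)⁻¹ * deriv (fun y => σ₂ y (t - s)) (x + (Real.sqrt μ)⁻¹ * s)
            - deriv (fun τ => σ₂ (x + (Real.sqrt μ)⁻¹ * s) τ) (t - s) = 0 := by
          rw [hPDE2 _ _ ⟨hy0, hy1⟩ hts, hσ₁zero, one_div]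
          ring
        rw [hz] at H
        exact H
      obtain ⟨c, _, hceq⟩ := exists_hasDerivAt_eq_slope g (fun _ => (0:ℝ)) hSpos hcont hd
      have hslope : g S = g 0 := by
        have hne : S - 0 ≠ 0 := by simpa using hSpos.ne'
        field_simp at hceq
        linarith [hceq]
      have hx1eq : x + (Real.sqrt μ)⁻¹ * S = 1 := by
        rw [hSdef]
        field_simp
        ring
      have hgS : g S = 0 := by
        have : g S = σ₂ 1 (t - S) := by rw [hg]; simp only []; rw [hx1eq]
        rw [this]
        exact (hbc (t - S) (by linarith)).2
      have hg0 : g 0 = σ₂ x t := by rw [hg]; simp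
      rw [← hg0, ← hslope, hgS]
  -- Conclusion
  rintro x hx t ht
  obtain ⟨hx0, hx1⟩ := hx
  constructor
  · apply h1 x ⟨hx0, hx1⟩ t
    nlinarith [hse.le]
  · apply h2 x ⟨hx0, hx1⟩ t
    nlinarith [hsμ.le]
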